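/- arXiv:1201.0557 — 2 statements merged into one kernel-verified Lean document; each statement's English description precedes it below -/
import Mathlib

section
/- Let A be a finite idempotent algebra, α a congruence of A, and k ≥ 2. If the quotient algebra A/α has a k-ary cyclic term operation and every α-block (as a subalgebra of A) has a k-ary cyclic term operation, then A has a k-ary cyclic term operation. -/
structure Signature : Type 1 where
  symbols : Type
  arity : symbols → ℕ

structure UAlgebra (σ : Signature) : Type 1 where
  carrier : Type
  op : ∀ s : σ.symbols, (Fin (σ.arity s) → carrier) → carrier

inductive Term (σ : Signature) (n : ℕ) : Type
  | var : Fin n → Term σ n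
  | app (s : σ.symbols) : (Fin (σ.arity s) → Term σ n) → Term σ n

def Term.eval {σ : Signature} (A : UAlgebra σ) {n : ℕ} :
    Term σ n → (Fin n → A.carrier) → A.carrier
  | .var i, x => x i
  | .app s ts, x => A.op s fun j => Term.eval A (ts j) x

/-- `B` is a subuniverse of the algebra `A`. -/
def Subuniverse {σ : Signature} (A : UAlgebra σ) (B : Set A.carrier) : Prop :=
  ∀ (s : σ.symbols) (a : Fin (σ.arity s) → A.carrier), (∀ i, a i ∈ B) → A.op s a ∈ B

/-- `B` absorbs `A` with respect to the term `t`. -/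
def AbsorbsWith {σ : Signature} (A : UAlgebra σ) (B : Set A.carrier) {n : ℕ} (t : Term σ n) : Prop :=
  ∀ (k : Fin n) (a : Fin n → A.carrier), (∀ i, i ≠ k → a i ∈ B) → t.eval A a ∈ B

/-- `C` absorbs the subalgebra with universe `B` (inside the ambient algebra `A`)
with respect to the term `t`. -/
def AbsorbsWithIn {σ : Signature} (A : UAlgebra σ) (B C : Set A.carrier) {n : ℕ}
    (t : Term σ n) : Prop :=
  ∀ (k : Fin n) (a : Fin n → A.carrier), (∀ i, a i ∈ B) → (∀ i, i ≠ k → a i ∈ C) →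
    t.eval A a ∈ C

/-- `B` is an absorbing subalgebra (subuniverse) of `A`. -/
def Absorbing {σ : Signature} (A : UAlgebra σ) (B : Set A.carrier) : Prop :=
  Subuniverse A B ∧ ∃ (n : ℕ) (t : Term σ n), AbsorbsWith A B t

/-- `B` is a proper absorbing subalgebra of `A`: `∅ ≠ B ≠ A`. -/
def ProperAbsorbing {σ : Signature} (A : UAlgebra σ) (B : Set A.carrier) : Prop :=
  Absorbing A B ∧ B.Nonempty ∧ B ≠ Set.univ

/-- `C` is a minimal absorbing subalgebra of `A`. -/
def MinAbsorbing {σ : Signature} (A : UAlgebra σ) (C : Set A.carrier) : Prop :=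
  Absorbing A C ∧ C.Nonempty ∧ ∀ C' ⊆ C, Absorbing A C' → C'.Nonempty → C' = C

/-- All (basic, equivalently term) operations of `A` are idempotent. -/
def Idempotent {σ : Signature} (A : UAlgebra σ) : Prop :=
  ∀ (s : σ.symbols) (a : A.carrier), A.op s (fun _ => a) = a

/-- `t` is a Taylor term of the algebra `A`. -/
def IsTaylorTerm {σ : Signature} (A : UAlgebra σ) {k : ℕ} (t : Term σ k) : Prop :=
  (∀ a : A.carrier, t.eval A (fun _ => a) = a) ∧
  ∀ j : Fin k, ∃ u v : Fin k → Fin 2, u j = 0 ∧ v j = 1 ∧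
    ∀ x : Fin 2 → A.carrier, t.eval A (fun i => x (u i)) = t.eval A (fun i => x (v i))

/-- The product of two algebras of the same signature. -/
def UAlgebra.prod {σ : Signature} (A B : UAlgebra σ) : UAlgebra σ where
  carrier := A.carrier × B.carrier
  op s x := (A.op s fun i => (x i).1, B.op s fun i => (x i).2)

/-- The `k`-th power of an algebra. -/
def UAlgebra.pow {σ : Signature} (A : UAlgebra σ) (k : ℕ) : UAlgebra σ where
  carrier := Fin k → A.carrier
  op s x := fun j => A.op s fun i => x i j

/-- `R ⊆ A × B` is subdirect: both projections are onto. -/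
def Subdirect2 {α β : Type} (R : Set (α × β)) : Prop :=
  (∀ a, ∃ b, (a, b) ∈ R) ∧ ∀ b, ∃ a, (a, b) ∈ R

/-- `a` and `a'` are linked in `R` (connected in the bipartite graph of `R`). -/
def LinkedPair {α β : Type} (R : Set (α × β)) (a a' : α) : Prop :=
  Relation.ReflTransGen (fun x y => ∃ b, (x, b) ∈ R ∧ (y, b) ∈ R) a a'

/-- `R` is linked: any two elements of the projection of `R` to the first
coordinate are `R`-linked. -/
def IsLinked {α β : Type} (R : Set (α × β)) : Prop :=
  ∀ a a', (∃ b, (a, b) ∈ R) → (∃ b, (a', b) ∈ R) → LinkedPair R a a'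

/-- Cyclic shift of a `k`-tuple. -/
def cycShift {α : Type} {k : ℕ} (x : Fin k → α) : Fin k → α := fun i =>
  x ⟨(i.val + 1) % k, Nat.mod_lt _ (Nat.lt_of_le_of_lt (Nat.zero_le _) i.isLt)⟩

/-- `t` is a cyclic term of `A`: idempotent and invariant under cyclic shift. -/
def IsCyclicTerm {σ : Signature} (A : UAlgebra σ) {k : ℕ} (t : Term σ k) : Prop :=
  (∀ a : A.carrier, t.eval A (fun _ => a) = a) ∧
  ∀ x : Fin k → A.carrier, t.eval A x = t.eval A (cycShift x)

/-- A congruence of `A`: an equivalence relation which is a subuniverse of `A²`. -/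
def IsCongruence {σ : Signature} (A : UAlgebra σ) (θ : Set (A.carrier × A.carrier)) : Prop :=
  Equivalence (fun a b => (a, b) ∈ θ) ∧ Subuniverse (A.prod A) θ


/-!
Start from a term `t₀` that is cyclic modulo `α`, and improve it one block at a time by
`u ↦ b(u(x), u(σx), …, u(σ^{k-1}x))`, where `σ` is the cyclic shift and `b` is cyclic on the
block `a/α`. Since `u ≡ t₀` and `t₀` is cyclic modulo `α`, for tuples `x` with `t₀(x) ∈ a/α` all
arguments of `b` lie in `a/α`, and shifting `x` shifts them cyclically: the new term is cyclic
on these tuples. On tuples where `u` was already cyclic, the arguments of `b` are all equal, so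
cyclicity achieved earlier survives. After running through the finitely many blocks the term is
cyclic everywhere, and it is idempotent because `A` is.
-/

open Function Set

variable {σ : Signature}

namespace Term

def subst {n m : ℕ} : Term σ n → (Fin n → Term σ m) → Term σ m
  | .var i, g => g i
  | .app s ts, g => .app s fun j => subst (ts j) g

theorem eval_subst (A : UAlgebra σ) {n m : ℕ} (t : Term σ n) (g : Fin n → Term σ m)
    (x : Fin m → A.carrier) : (t.subst g).eval A x = t.eval A fun i => (g i).eval A x := by
  induction t with
  | var i => rfl
  | app s ts ih => exact congrArg (A.op s) (funext ih)

theorem eval_prod (A B : UAlgebra σ) {n : ℕ} (t : Term σ n) (z : Fin n → A.carrier × B.carrier) :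
    t.eval (A.prod B) z = (t.eval A fun i => (z i).1, t.eval B fun i => (z i).2) := by
  induction t with
  | var i => rfl
  | app s ts ih => exact congrArg ((A.prod B).op s) (funext ih)

theorem eval_const_of_idempotent {A : UAlgebra σ} (hI : Idempotent A) {n : ℕ} (t : Term σ n)
    (a : A.carrier) : t.eval A (fun _ => a) = a := by
  induction t with
  | var i => rfl
  | app s ts ih => exact (congrArg (A.op s) (funext ih)).trans (hI s a)

end Term

theorem Subuniverse.eval_mem {A : UAlgebra σ} {B : Set A.carrier} (hB : Subuniverse A B) {n : ℕ}
    (t : Term σ n) {x : Fin n → A.carrier} (hx : ∀ i, x i ∈ B) : t.eval A x ∈ B := by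
  induction t with
  | var i => exact hx i
  | app s ts ih => exact hB s _ ih

theorem IsCongruence.eval_mem_block {A : UAlgebra σ} {θ : Set (A.carrier × A.carrier)}
    (hθ : IsCongruence A θ) (hI : Idempotent A) {n : ℕ} (t : Term σ n) {x : Fin n → A.carrier}
    {a : A.carrier} (hx : ∀ i, (x i, a) ∈ θ) : (t.eval A x, a) ∈ θ := by
  have h := hθ.2.eval_mem t (x := fun i => (x i, a)) hx
  rw [Term.eval_prod, t.eval_const_of_idempotent hI] at h
  exact h

theorem Equivalence.rel_iterate_of_mapsTo {α β : Type*} {r : β → β → Prop} (hr : Equivalence r)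
    {f : α → β} {g : α → α} {S : Set α} (hS : MapsTo g S S) (hf : ∀ x ∈ S, r (f x) (f (g x)))
    {x : α} (hx : x ∈ S) (m : ℕ) : r (f x) (f (g^[m] x)) := by
  induction m with
  | zero => exact hr.refl _
  | succ m ih =>
    rw [iterate_succ_apply']
    exact hr.trans ih (hf _ (hS.iterate m hx))

section CycShift

variable {α : Type} {k : ℕ}

theorem cycShift_iterate_apply (x : Fin k → α) (m : ℕ) (j : Fin k) :
    cycShift^[m] x j = x ⟨(j + m) % k, Nat.mod_lt _ j.pos⟩ := by
  induction m generalizing x with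
  | zero => simp [Nat.mod_eq_of_lt j.isLt]
  | succ m ih =>
    rw [iterate_succ_apply, ih]
    simp only [cycShift, Nat.mod_add_mod, add_assoc]

theorem cycShift_iterate_mod (x : Fin k → α) (m : ℕ) : cycShift^[m % k] x = cycShift^[m] x := by
  funext j
  simp only [cycShift_iterate_apply, Nat.add_mod_mod]

end CycShift

section Rotations

variable {A : UAlgebra σ} {k : ℕ}

def Term.rotations (A : UAlgebra σ) (t : Term σ k) (x : Fin k → A.carrier) : Fin k → A.carrier :=
  fun i => t.eval A (cycShift^[i] x)

theorem Term.rotations_cycShift (t : Term σ k) (x : Fin k → A.carrier) :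
    t.rotations A (cycShift x) = cycShift (t.rotations A x) := by
  funext i
  rw [Term.rotations, ← iterate_succ_apply, ← cycShift_iterate_mod]
  rfl

/-- `s.cyclicComp u` is the term `s(u(x), u(σx), …, u(σ^{k-1}x))`, `σ` the cyclic shift. -/
def Term.cyclicComp (s u : Term σ k) : Term σ k :=
  s.subst fun i => u.subst fun j => .var (cycShift^[i] id j)

theorem Term.eval_cyclicComp (s u : Term σ k) (x : Fin k → A.carrier) :
    (s.cyclicComp u).eval A x = s.eval A (u.rotations A x) := by
  rw [cyclicComp, eval_subst]
  congr 1
  funext i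
  rw [eval_subst]
  exact congrArg (u.eval A) (funext fun j => by simp only [eval, cycShift_iterate_apply, id])

theorem Term.eval_cyclicComp_cycShift (s u : Term σ k) (x : Fin k → A.carrier) :
    (s.cyclicComp u).eval A (cycShift x) = s.eval A (cycShift (u.rotations A x)) := by
  rw [eval_cyclicComp, rotations_cycShift]

def IsCyclicOn (A : UAlgebra σ) (t : Term σ k) (S : Set (Fin k → A.carrier)) : Prop :=
  ∀ x ∈ S, t.eval A x = t.eval A (cycShift x)

variable {s u : Term σ k} {S : Set (Fin k → A.carrier)}

theorem IsCyclicOn.rotations_eq_const (hu : IsCyclicOn A u S) (hS : MapsTo cycShift S S)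
    {x : Fin k → A.carrier} (hx : x ∈ S) : u.rotations A x = fun _ => u.eval A x :=
  funext fun i => (eq_equivalence.rel_iterate_of_mapsTo hS hu hx i).symm

theorem IsCyclicOn.cyclicComp (hu : IsCyclicOn A u S) (hS : MapsTo cycShift S S) (s : Term σ k) :
    IsCyclicOn A (s.cyclicComp u) S := by
  intro x hx
  rw [Term.eval_cyclicComp_cycShift, Term.eval_cyclicComp, hu.rotations_eq_const hS hx]
  rfl

theorem IsCyclicOn.cyclicComp_of_rotations_mem {T : Set (Fin k → A.carrier)}
    (hs : IsCyclicOn A s T) (hu : ∀ x ∈ S, u.rotations A x ∈ T) :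
    IsCyclicOn A (s.cyclicComp u) S := by
  intro x hx
  rw [Term.eval_cyclicComp_cycShift, Term.eval_cyclicComp]
  exact hs _ (hu x hx)

end Rotations

section Congruence

variable {A : UAlgebra σ} {θ : Set (A.carrier × A.carrier)} {k : ℕ} {t₀ : Term σ k}

theorem rotations_rel (hθ : Equivalence fun a b => (a, b) ∈ θ)
    (ht₀ : ∀ x, (t₀.eval A x, t₀.eval A (cycShift x)) ∈ θ) {u : Term σ k}
    (hu : ∀ x, (u.eval A x, t₀.eval A x) ∈ θ) (x : Fin k → A.carrier) (i : Fin k) :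
    (u.rotations A x i, t₀.eval A x) ∈ θ :=
  hθ.trans (hu _) <| hθ.symm <|
    hθ.rel_iterate_of_mapsTo (mapsTo_univ _ _) (fun x _ => ht₀ x) (mem_univ x) i

theorem cyclicComp_rel (hθ : IsCongruence A θ) (hI : Idempotent A)
    (ht₀ : ∀ x, (t₀.eval A x, t₀.eval A (cycShift x)) ∈ θ) (s : Term σ k) {u : Term σ k}
    (hu : ∀ x, (u.eval A x, t₀.eval A x) ∈ θ) (x : Fin k → A.carrier) :
    ((s.cyclicComp u).eval A x, t₀.eval A x) ∈ θ := by
  rw [Term.eval_cyclicComp]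
  exact hθ.eval_mem_block hI s (rotations_rel hθ.1 ht₀ hu x)

theorem mapsTo_cycShift_preimage_block (hθ : Equivalence fun a b => (a, b) ∈ θ)
    (ht₀ : ∀ x, (t₀.eval A x, t₀.eval A (cycShift x)) ∈ θ) (a : A.carrier) :
    MapsTo cycShift {x | (t₀.eval A x, a) ∈ θ} {x | (t₀.eval A x, a) ∈ θ} :=
  fun x hx => hθ.trans (hθ.symm (ht₀ x)) hx

theorem isCyclicOn_cyclicComp_of_block (hθ : Equivalence fun a b => (a, b) ∈ θ)
    (ht₀ : ∀ x, (t₀.eval A x, t₀.eval A (cycShift x)) ∈ θ) {a : A.carrier} {b u : Term σ k}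
    (hb : IsCyclicOn A b {y | ∀ i, (y i, a) ∈ θ}) (hu : ∀ x, (u.eval A x, t₀.eval A x) ∈ θ) :
    IsCyclicOn A (b.cyclicComp u) {x | (t₀.eval A x, a) ∈ θ} :=
  hb.cyclicComp_of_rotations_mem fun x hx i => hθ.trans (rotations_rel hθ ht₀ hu x i) hx

theorem exists_isCyclicOn_preimage_blocks (hθ : IsCongruence A θ) (hI : Idempotent A)
    (ht₀ : ∀ x, (t₀.eval A x, t₀.eval A (cycShift x)) ∈ θ)
    (hblock : ∀ a, ∃ b : Term σ k, IsCyclicOn A b {y | ∀ i, (y i, a) ∈ θ})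
    (F : Finset A.carrier) : ∃ u : Term σ k, (∀ x, (u.eval A x, t₀.eval A x) ∈ θ) ∧
      ∀ a ∈ F, IsCyclicOn A u {x | (t₀.eval A x, a) ∈ θ} := by
  classical
  induction F using Finset.induction_on with
  | empty => exact ⟨t₀, fun x => hθ.1.refl _, by simp⟩
  | insert a F _ ih =>
    obtain ⟨u, hu, hF⟩ := ih
    obtain ⟨b, hb⟩ := hblock a
    refine ⟨b.cyclicComp u, cyclicComp_rel hθ hI ht₀ b hu, ?_⟩
    rw [Finset.forall_mem_insert]
    exact ⟨isCyclicOn_cyclicComp_of_block hθ.1 ht₀ hb hu,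
      fun c hc => (hF c hc).cyclicComp (mapsTo_cycShift_preimage_block hθ.1 ht₀ c) b⟩

end Congruence

theorem cyclic_term_lift_general {σ : Signature} (A : UAlgebra σ) [Fintype A.carrier]
    (hI : Idempotent A)
    (θ : Set (A.carrier × A.carrier)) (hθ : IsCongruence A θ)
    (k : ℕ)
    (hquot : ∃ t : Term σ k,
      (∀ a : A.carrier, (t.eval A (fun _ => a), a) ∈ θ) ∧
      ∀ x : Fin k → A.carrier, (t.eval A x, t.eval A (cycShift x)) ∈ θ)
    (hblock : ∀ a : A.carrier, ∃ t : Term σ k,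
      ∀ x : Fin k → A.carrier, (∀ i, (x i, a) ∈ θ) → t.eval A x = t.eval A (cycShift x)) :
    ∃ t : Term σ k, IsCyclicTerm A t := by
  obtain ⟨t₀, -, ht₀⟩ := hquot
  obtain ⟨t, -, ht⟩ := exists_isCyclicOn_preimage_blocks hθ hI ht₀ hblock Finset.univ
  exact ⟨t, t.eval_const_of_idempotent hI,
    fun x => ht (t₀.eval A x) (Finset.mem_univ _) x (hθ.1.refl _)⟩

/-- If `A` is a finite idempotent algebra, `α` a congruence of
`A` and `k ≥ 2`, and both the quotient `A/α` and every `α`-block have `k`-ary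
cyclic term operations, then `A` has a `k`-ary cyclic term operation. (A cyclic
term of the quotient is expressed by a term of `A` which is cyclic and idempotent
modulo `α`; a cyclic term of the block of `a` is a term of `A` which is cyclic on
tuples from that block.) -/
theorem cyclic_term_lift {σ : Signature} (A : UAlgebra σ) [Fintype A.carrier]
    (hI : Idempotent A)
    (θ : Set (A.carrier × A.carrier)) (hθ : IsCongruence A θ)
    (k : ℕ) (hk : 2 ≤ k)
    (hquot : ∃ t : Term σ k,
      (∀ a : A.carrier, (t.eval A (fun _ => a), a) ∈ θ) ∧
      ∀ x : Fin k → A.carrier, (t.eval A x, t.eval A (cycShift x)) ∈ θ)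
    (hblock : ∀ a : A.carrier, ∃ t : Term σ k,
      ∀ x : Fin k → A.carrier, (∀ i, (x i, a) ∈ θ) → t.eval A x = t.eval A (cycShift x)) :
    ∃ t : Term σ k, IsCyclicTerm A t :=
  cyclic_term_lift_general A hI θ hθ k hquot hblock
end

section
/- For a finite algebra A, if A has cyclic term operations of arities m and n, then A has a cyclic term operation of arity mn; conversely, if A has a cyclic term of arity mn then it has cyclic terms of arities m and n. Consequently the set C(A) of arities of cyclic terms of A is closed under multiplication and under taking divisors greater than 1 in the sense that mn ∈ C(A) iff m, n ∈ C(A). -/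
def Term.subst_s18 {σ : Signature} {m N : ℕ} : Term σ m → (Fin m → Term σ N) → Term σ N
  | .var i, f => f i
  | .app s ts, f => .app s fun j => (ts j).subst_s18 f

theorem Term.eval_subst_s18 {σ : Signature} (A : UAlgebra σ) {m N : ℕ}
    (t : Term σ m) (f : Fin m → Term σ N) (x : Fin N → A.carrier) :
    (t.subst_s18 f).eval A x = t.eval A fun i => (f i).eval A x := by
  induction t with
  | var i => rfl
  | app s ts ih => simp only [Term.subst_s18, Term.eval, ih]

/-- A cyclic term restricts along divisibility. -/
theorem cyclic_of_dvd {σ : Signature} (A : UAlgebra σ) {m N : ℕ} (hm : 0 < m)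
    (hdvd : m ∣ N) (u : Term σ N) (hu : IsCyclicTerm A u) :
    ∃ t : Term σ m, IsCyclicTerm A t := by
  refine ⟨u.subst_s18 fun k => .var ⟨k.val % m, Nat.mod_lt _ hm⟩, ?_, ?_⟩
  · intro a
    rw [Term.eval_subst_s18]
    exact hu.1 a
  · intro x
    rw [Term.eval_subst_s18, Term.eval_subst_s18]
    have := hu.2 (fun k => x ⟨k.val % m, Nat.mod_lt _ hm⟩)
    simp only [Term.eval] at this ⊢
    rw [this]
    congr 1
    funext k
    show x ⟨((k.val + 1) % N) % m, _⟩ = x ⟨(k.val % m + 1) % m, _⟩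
    congr 1
    apply Fin.ext
    show ((k.val + 1) % N) % m = (k.val % m + 1) % m
    rw [Nat.mod_mod_of_dvd _ hdvd, Nat.add_mod]
    simp [Nat.add_mod]

/-- Composition of cyclic terms of arities `m` and `n` gives one of arity `m * n`. -/
theorem cyclic_mul {σ : Signature} (A : UAlgebra σ) {m n : ℕ} (hm : 0 < m) (hn : 0 < n)
    (s : Term σ m) (hs : IsCyclicTerm A s) (t : Term σ n) (ht : IsCyclicTerm A t) :
    ∃ u : Term σ (m * n), IsCyclicTerm A u := by
  have hmn : 0 < m * n := Nat.mul_pos hm hn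
  refine ⟨s.subst_s18 fun j => t.subst_s18 fun i =>
      .var ⟨(j.val + i.val * m) % (m * n), Nat.mod_lt _ hmn⟩, ?_, ?_⟩
  · intro a
    simp only [Term.eval_subst_s18, Term.eval]
    rw [show (fun j : Fin m => t.eval A fun _ => a) = (fun _ : Fin m => a) from
      funext fun j => ht.1 a]
    exact hs.1 a
  · intro x
    simp only [Term.eval_subst_s18, Term.eval, cycShift]
    set a : Fin m → A.carrier := fun j =>
      t.eval A fun i => x ⟨(j.val + i.val * m) % (m * n), Nat.mod_lt _ hmn⟩ with ha
    rw [show (s.eval A fun j => t.eval A fun i =>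
          x ⟨(j.val + i.val * m) % (m * n), Nat.mod_lt _ hmn⟩) = s.eval A a from rfl,
      hs.2 a]
    congr 1
    funext j
    show (t.eval A fun i =>
        x ⟨((j.val + 1) % m + i.val * m) % (m * n), Nat.mod_lt _ hmn⟩) = t.eval A fun i =>
      x ⟨((j.val + i.val * m) % (m * n) + 1) % (m * n), Nat.mod_lt _ hmn⟩
    by_cases h : j.val + 1 < m
    · congr 1
      funext i
      congr 1
      apply Fin.ext
      show ((j.val + 1) % m + i.val * m) % (m * n)
          = ((j.val + i.val * m) % (m * n) + 1) % (m * n)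
      rw [Nat.mod_eq_of_lt h, Nat.mod_add_mod, Nat.add_right_comm]
    · have hj : j.val + 1 = m := by omega
      have key : ∀ i : Fin n,
          ((j.val + 1) % m + i.val * m) % (m * n) = (i.val * m) % (m * n) := by
        intro i
        rw [hj, Nat.mod_self, Nat.zero_add]
      rw [show (fun i : Fin n =>
            x ⟨((j.val + 1) % m + i.val * m) % (m * n), Nat.mod_lt _ hmn⟩)
          = (fun i : Fin n => x ⟨(i.val * m) % (m * n), Nat.mod_lt _ hmn⟩) from
        funext fun i => congrArg x (Fin.ext (key i))]
      rw [ht.2]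
      congr 1
      funext i
      show x ⟨(((i.val + 1) % n) * m) % (m * n), _⟩ = _
      congr 1
      apply Fin.ext
      show (((i.val + 1) % n) * m) % (m * n)
          = ((j.val + i.val * m) % (m * n) + 1) % (m * n)
      rw [Nat.mod_add_mod, Nat.mul_comm m n, ← Nat.mul_mod_mul_right,
        Nat.mod_mod_of_dvd _ dvd_rfl]
      congr 1
      rw [Nat.add_mul, Nat.one_mul, Nat.add_right_comm j.val (i.val * m) 1, hj,
        Nat.add_comm]
/-- For a finite algebra `A` and `m, n ≥ 2`: `A` has cyclic
terms of arities `m` and `n` iff `A` has a cyclic term of arity `m * n`. -/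
theorem cyclic_arity_mul {σ : Signature} (A : UAlgebra σ) [Fintype A.carrier]
    (m n : ℕ) (hm : 2 ≤ m) (hn : 2 ≤ n) :
    ((∃ t : Term σ m, IsCyclicTerm A t) ∧ (∃ t : Term σ n, IsCyclicTerm A t)) ↔
      (∃ t : Term σ (m * n), IsCyclicTerm A t) := by
  have hm0 : 0 < m := by omega
  have hn0 : 0 < n := by omega
  constructor
  · rintro ⟨⟨s, hs⟩, ⟨t, ht⟩⟩
    exact cyclic_mul A hm0 hn0 s hs t ht
  · rintro ⟨u, hu⟩
    exact ⟨cyclic_of_dvd A hm0 ⟨n, rfl⟩ u hu,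
      cyclic_of_dvd A hn0 ⟨m, Nat.mul_comm m n⟩ u hu⟩
end
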